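/- Let n ≥ 1, t ≥ 0, and let C be any 2^n × 2^n complex matrix. Then ⟨|C|, Ψ_t^{⊗n}(|C|)⟩ + ⟨|C†|, Ψ_t^{⊗n}(|C†|)⟩ ≥ Re⟨C, Ψ_t^{⊗n}(C)⟩ + Re⟨C†, Ψ_t^{⊗n}(C†)⟩, where |C| = √(C†C) and |C†| = √(CC†). -/

import Mathlib

/-!
`Ψ_t^{⊗n}` is a composition of convex combinations of the identity and of the conditional
expectations `E_i = condExpQ i`, each of Kraus form `X ↦ ∑ K X K†`; so it suffices to prove the
inequality for a single map `X ↦ K X K†`. For Hermitian `H = H⁺ - H⁻` with `|H| = H⁺ + H⁻`, the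
difference `tr(|H| K |H| K†) - Re tr(H K H K†)` equals `2 Re tr(H⁺ K H⁻ K† + H⁻ K H⁺ K†) ≥ 0`.
Applying this to `H = [[0, C], [C†, 0]]`, whose absolute value is `diag(|C†|, |C|)`, and to
`K ⊕ K` gives the claim.
-/

noncomputable section

open scoped Matrix ComplexOrder

/-- The algebra of operators on `(ℂ²)^{⊗ n}`, as `2^n × 2^n` matrices indexed by `Fin n → Fin 2`. -/
abbrev Mq (n : ℕ) := Matrix (Fin n → Fin 2) (Fin n → Fin 2) ℂ

/-- Normalized trace `τ(X) = 2^{-n} tr X`. -/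
def qTau {n : ℕ} (X : Mq n) : ℂ := ((2 : ℂ) ^ n)⁻¹ * X.trace

/-- Real part of the normalized trace. -/
def qTauR {n : ℕ} (X : Mq n) : ℝ := (qTau X).re

/-- Normalized Hilbert–Schmidt inner product `⟨X, Y⟩ = τ(X† Y)`. -/
def qInner {n : ℕ} (X Y : Mq n) : ℂ := qTau (Xᴴ * Y)

/-- `|X| = √(X† X)`. -/
def mAbs {n : ℕ} (X : Mq n) : Mq n :=
  (Matrix.posSemidef_conjTranspose_mul_self X).1.eigenvectorUnitary.1 *
    Matrix.diagonal (((↑) : ℝ → ℂ) ∘ Real.sqrt ∘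
      (Matrix.posSemidef_conjTranspose_mul_self X).1.eigenvalues) *
    (star (Matrix.posSemidef_conjTranspose_mul_self X).1.eigenvectorUnitary : Mq n)

/-- The entropy `Ent(X) = τ(X ln X) − τ(X) ln τ(X)` (with the convention `0 ln 0 = 0`),
for positive semidefinite `X`, via the continuous functional calculus. -/
def mEnt {n : ℕ} (X : Mq n) : ℝ :=
  qTauR (cfc (fun x : ℝ => x * Real.log x) X) - qTauR X * Real.log (qTauR X)

/-- Real powers `X^p` of a positive semidefinite matrix, by functional calculus on the
support (`0 ^ p = 0` for `p ≠ 0`). -/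
def mPow {n : ℕ} (X : Mq n) (p : ℝ) : Mq n := cfc (fun x : ℝ => x ^ p) X

/-- Normalized Schatten `p`-norm `‖X‖_p = (τ(|X|^p))^{1/p}`. -/
def schatten {n : ℕ} (p : ℝ) (X : Mq n) : ℝ := qTauR (mPow (mAbs X) p) ^ (1 / p)

/-- Conditional expectation onto the `i`-th qubit being maximally mixed:
`E_i = I^{⊗(i-1)} ⊗ (τ(·) I) ⊗ I^{⊗(n-i)}`. -/
def condExpQ {n : ℕ} (i : Fin n) (X : Mq n) : Mq n :=
  Matrix.of fun a b =>
    if a i = b i then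
      (2 : ℂ)⁻¹ * ∑ c : Fin 2, X (Function.update a i c) (Function.update b i c)
    else 0

/-- The Lindblad generator `K_n = Σ_i L̂_i`, where `L̂_i` acts as `L(X) = X − τ(X) I`
on the `i`-th tensor factor. -/
def Kq (n : ℕ) (X : Mq n) : Mq n := ∑ i : Fin n, (X - condExpQ i X)

/-- The depolarizing channel on the `i`-th qubit:
`e^{-t} X + (1 - e^{-t}) τ_i(X) ⊗ I_i`. -/
def depolStep {n : ℕ} (t : ℝ) (i : Fin n) (X : Mq n) : Mq n :=
  (Real.exp (-t) : ℂ) • X + ((1 : ℂ) - (Real.exp (-t) : ℂ)) • condExpQ i X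

/-- `Ψ_t^{⊗ n}`: the `n`-fold tensor power of the qubit depolarizing channel, i.e. the
composition over all qubits `i` of the depolarizing channel acting on the `i`-th factor. -/
def psiDep {n : ℕ} (t : ℝ) (X : Mq n) : Mq n :=
  (List.finRange n).foldr (fun i Y => depolStep t i Y) X

/-- The binary entropy function `h(s) = −s ln s − (1−s) ln(1−s)`. -/
def binEnt (s : ℝ) : ℝ := -(s * Real.log s) - (1 - s) * Real.log (1 - s)

/-- `h⁻¹ : [0, ln 2] → [0, 1/2]`, the inverse of the restriction of the binary entropy
function to `[0, 1/2]`. -/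
def binEntInv (y : ℝ) : ℝ := Function.invFunOn binEnt (Set.Icc 0 (1 / 2)) y

/-- `φ(ξ) = 1/2 − √(h⁻¹(ln 2 − ξ)(1 − h⁻¹(ln 2 − ξ)))`. -/
def phiF (ξ : ℝ) : ℝ :=
  1 / 2 - Real.sqrt (binEntInv (Real.log 2 - ξ) * (1 - binEntInv (Real.log 2 - ξ)))

/-- `α(ξ) = φ(ξ)/ξ` for `ξ ∈ (0, ln 2]`, with `α(0) = 1/2` by continuous extension. -/
def alphaF (ξ : ℝ) : ℝ := if ξ = 0 then 1 / 2 else ξ⁻¹ * phiF ξ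

open scoped MatrixOrder

namespace Matrix

theorem trace_fromBlocks {l m α : Type*} [Fintype l] [Fintype m] [AddCommMonoid α]
    (A : Matrix l l α) (B : Matrix l m α) (C : Matrix m l α) (D : Matrix m m α) :
    (fromBlocks A B C D).trace = A.trace + D.trace := by
  simp [trace, Fintype.sum_sum_type]

variable {m : Type*} [Fintype m] [DecidableEq m]

theorem PosSemidef.re_trace_mul_nonneg {A B : Matrix m m ℂ} (hA : A.PosSemidef)
    (hB : B.PosSemidef) : 0 ≤ (A * B).trace.re := by
  obtain ⟨L, rfl⟩ := CStarAlgebra.nonneg_iff_eq_star_mul_self.mp hA.nonneg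
  have h : 0 ≤ (L * B * Lᴴ).trace := (hB.mul_mul_conjTranspose_same L).trace_nonneg
  rw [star_eq_conjTranspose, Matrix.mul_assoc, trace_mul_comm]
  exact (Complex.nonneg_iff.mp h).1

theorem PosSemidef.fromBlocks_zero {l : Type*} [Fintype l] [DecidableEq l]
    {A : Matrix m m ℂ} {D : Matrix l l ℂ} (hA : A.PosSemidef) (hD : D.PosSemidef) :
    (fromBlocks A 0 0 D).PosSemidef := by
  obtain ⟨a, rfl⟩ := CStarAlgebra.nonneg_iff_eq_star_mul_self.mp hA.nonneg
  obtain ⟨d, rfl⟩ := CStarAlgebra.nonneg_iff_eq_star_mul_self.mp hD.nonneg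
  convert posSemidef_conjTranspose_mul_self (fromBlocks a 0 0 d) using 1
  simp [fromBlocks_conjTranspose, fromBlocks_multiply, star_eq_conjTranspose]

theorem re_trace_sub_mul_conj_le_add {P N : Matrix m m ℂ} (hP : P.PosSemidef)
    (hN : N.PosSemidef) (K : Matrix m m ℂ) :
    ((P - N) * (K * (P - N) * Kᴴ)).trace.re ≤ ((P + N) * (K * (P + N) * Kᴴ)).trace.re := by
  have hPN := hP.re_trace_mul_nonneg (hN.mul_mul_conjTranspose_same K)
  have hNP := hN.re_trace_mul_nonneg (hP.mul_mul_conjTranspose_same K)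
  simp only [Matrix.mul_add, Matrix.add_mul, Matrix.mul_sub, Matrix.sub_mul, trace_add,
    trace_sub, Complex.add_re, Complex.sub_re]
  linarith

theorem IsHermitian.re_trace_mul_conj_le_abs {H : Matrix m m ℂ} (hH : H.IsHermitian)
    (K : Matrix m m ℂ) :
    (H * (K * H * Kᴴ)).trace.re ≤ (CFC.abs H * (K * CFC.abs H * Kᴴ)).trace.re := by
  rw [← CFC.posPart_add_negPart H hH]
  conv_lhs => rw [← CFC.posPart_sub_negPart H hH]
  exact re_trace_sub_mul_conj_le_add (nonneg_iff_posSemidef.mp (CFC.posPart_nonneg H))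
    (nonneg_iff_posSemidef.mp (CFC.negPart_nonneg H)) K

theorem abs_fromBlocks_zero_conjTranspose (C : Matrix m m ℂ) :
    CFC.abs (fromBlocks 0 C Cᴴ 0) = fromBlocks (CFC.abs Cᴴ) 0 0 (CFC.abs C) := by
  have hB : 0 ≤ fromBlocks (CFC.abs Cᴴ) 0 0 (CFC.abs C) :=
    (PosSemidef.fromBlocks_zero (nonneg_iff_posSemidef.mp (CFC.abs_nonneg Cᴴ))
      (nonneg_iff_posSemidef.mp (CFC.abs_nonneg C))).nonneg
  rw [CFC.abs, CFC.sqrt_eq_iff _ _ (star_mul_self_nonneg _) hB]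
  simp [fromBlocks_conjTranspose, fromBlocks_multiply, CFC.abs_mul_abs, star_eq_conjTranspose]

theorem re_trace_conj_add_le_abs (C K : Matrix m m ℂ) :
    (Cᴴ * (K * C * Kᴴ)).trace.re + (C * (K * Cᴴ * Kᴴ)).trace.re ≤
      (CFC.abs C * (K * CFC.abs C * Kᴴ)).trace.re +
        (CFC.abs Cᴴ * (K * CFC.abs Cᴴ * Kᴴ)).trace.re := by
  have hH : (fromBlocks 0 C Cᴴ 0).IsHermitian := by
    simp [IsHermitian, fromBlocks_conjTranspose]
  have h := hH.re_trace_mul_conj_le_abs (fromBlocks K 0 0 K)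
  rw [abs_fromBlocks_zero_conjTranspose] at h
  simp only [fromBlocks_conjTranspose, fromBlocks_multiply, trace_fromBlocks,
    conjTranspose_zero, Matrix.mul_zero, Matrix.zero_mul, add_zero, zero_add,
    Complex.add_re] at h
  linarith

end Matrix

section Kraus

variable {m : Type*} [Fintype m]

def IsKrausMap (Φ : Matrix m m ℂ → Matrix m m ℂ) : Prop :=
  ∃ (ι : Type) (_ : Fintype ι) (K : ι → Matrix m m ℂ), ∀ X, Φ X = ∑ i, K i * X * (K i)ᴴ

theorem isKrausMap_id [DecidableEq m] : IsKrausMap fun X : Matrix m m ℂ => X :=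
  ⟨Unit, inferInstance, fun _ => 1, fun X => by simp⟩

namespace IsKrausMap

variable {Φ Ψ : Matrix m m ℂ → Matrix m m ℂ}

theorem comp (hΦ : IsKrausMap Φ) (hΨ : IsKrausMap Ψ) : IsKrausMap fun X => Φ (Ψ X) := by
  obtain ⟨ι, _, K, hK⟩ := hΦ
  obtain ⟨κ, _, L, hL⟩ := hΨ
  refine ⟨ι × κ, inferInstance, fun p => K p.1 * L p.2, fun X => ?_⟩
  simp only [hK, hL, Fintype.sum_prod_type, Matrix.mul_sum, Matrix.sum_mul,
    Matrix.conjTranspose_mul, Matrix.mul_assoc]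

theorem add (hΦ : IsKrausMap Φ) (hΨ : IsKrausMap Ψ) : IsKrausMap fun X => Φ X + Ψ X := by
  obtain ⟨ι, _, K, hK⟩ := hΦ
  obtain ⟨κ, _, L, hL⟩ := hΨ
  exact ⟨ι ⊕ κ, inferInstance, Sum.elim K L, fun X => by simp [hK, hL, Fintype.sum_sum_type]⟩

theorem real_smul (hΦ : IsKrausMap Φ) {a : ℝ} (ha : 0 ≤ a) :
    IsKrausMap fun X => (a : ℂ) • Φ X := by
  obtain ⟨ι, _, K, hK⟩ := hΦ
  refine ⟨ι, inferInstance, fun i => (Real.sqrt a : ℂ) • K i, fun X => ?_⟩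
  have hsq : (Real.sqrt a : ℂ) * (Real.sqrt a : ℂ) = a := by
    exact_mod_cast Real.mul_self_sqrt ha
  simp only [hK, Finset.smul_sum, Matrix.conjTranspose_smul, Complex.star_def,
    Complex.conj_ofReal, Matrix.smul_mul, Matrix.mul_smul, smul_smul, hsq]

theorem re_trace_add_le_abs [DecidableEq m] (hΦ : IsKrausMap Φ) (C : Matrix m m ℂ) :
    (Cᴴ * Φ C).trace.re + (C * Φ Cᴴ).trace.re ≤
      (CFC.abs C * Φ (CFC.abs C)).trace.re + (CFC.abs Cᴴ * Φ (CFC.abs Cᴴ)).trace.re := by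
  obtain ⟨ι, _, K, hK⟩ := hΦ
  simp only [hK, Matrix.mul_sum, Matrix.trace_sum, Complex.re_sum, ← Finset.sum_add_distrib]
  exact Finset.sum_le_sum fun i _ => Matrix.re_trace_conj_add_le_abs C (K i)

end IsKrausMap

theorem isKrausMap_foldr {ι : Type*} {Φ : ι → Matrix m m ℂ → Matrix m m ℂ} [DecidableEq m]
    (hΦ : ∀ i, IsKrausMap (Φ i)) (l : List ι) : IsKrausMap fun X => l.foldr Φ X := by
  induction l with
  | nil => exact isKrausMap_id
  | cons i l ih => exact (hΦ i).comp ih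

end Kraus

/-- `|d⟩⟨c|` on the `i`-th qubit, tensored with the identity on the others. -/
def qubitUnit {n : ℕ} (i : Fin n) (c d : Fin 2) : Mq n :=
  Matrix.of fun a b => if a i = d ∧ b = Function.update a i c then 1 else 0

theorem qubitUnit_mul_mul_conjTranspose_apply {n : ℕ} (i : Fin n) (c d : Fin 2) (X : Mq n)
    (a b : Fin n → Fin 2) :
    (qubitUnit i c d * X * (qubitUnit i c d)ᴴ) a b =
      if a i = d ∧ b i = d then X (Function.update a i c) (Function.update b i c) else 0 := by
  simp only [Matrix.mul_apply, Matrix.conjTranspose_apply, qubitUnit, Matrix.of_apply]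
  by_cases ha : a i = d <;> by_cases hb : b i = d <;> simp [ha, hb, Finset.sum_ite_eq']

theorem condExpQ_eq_sum {n : ℕ} (i : Fin n) (X : Mq n) :
    condExpQ i X = ((2⁻¹ : ℝ) : ℂ) •
      ∑ p : Fin 2 × Fin 2, qubitUnit i p.1 p.2 * X * (qubitUnit i p.1 p.2)ᴴ := by
  ext a b
  simp only [condExpQ, Matrix.of_apply, Matrix.smul_apply, Matrix.sum_apply,
    qubitUnit_mul_mul_conjTranspose_apply, Fintype.sum_prod_type, smul_eq_mul]
  by_cases h : a i = b i
  · simp [h]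
  · rw [if_neg h, eq_comm, mul_eq_zero]
    exact Or.inr <| Finset.sum_eq_zero fun c _ => Finset.sum_eq_zero fun d _ =>
      if_neg fun hd => h (hd.1.trans hd.2.symm)

theorem isKrausMap_condExpQ {n : ℕ} (i : Fin n) : IsKrausMap (condExpQ i : Mq n → Mq n) := by
  have h : IsKrausMap fun X : Mq n =>
      ∑ p : Fin 2 × Fin 2, qubitUnit i p.1 p.2 * X * (qubitUnit i p.1 p.2)ᴴ :=
    ⟨Fin 2 × Fin 2, inferInstance, fun p => qubitUnit i p.1 p.2, fun _ => rfl⟩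
  convert h.real_smul (a := 2⁻¹) (by norm_num) using 1
  exact funext (condExpQ_eq_sum i)

theorem isKrausMap_depolStep {n : ℕ} {t : ℝ} (ht : 0 ≤ t) (i : Fin n) :
    IsKrausMap (depolStep t i : Mq n → Mq n) := by
  have hexp : Real.exp (-t) ≤ 1 := Real.exp_le_one_iff.mpr (neg_nonpos.mpr ht)
  convert (isKrausMap_id.real_smul (Real.exp_nonneg (-t))).add
    ((isKrausMap_condExpQ i).real_smul (sub_nonneg.mpr hexp)) using 1
  funext X
  simp [depolStep]

theorem isKrausMap_psiDep {n : ℕ} {t : ℝ} (ht : 0 ≤ t) : IsKrausMap (psiDep (n := n) t) :=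
  isKrausMap_foldr (isKrausMap_depolStep ht) _

theorem mAbs_eq_abs {n : ℕ} (X : Mq n) : mAbs X = CFC.abs X := by
  have hXX := Matrix.posSemidef_conjTranspose_mul_self X
  rw [CFC.abs, Matrix.star_eq_conjTranspose, CFC.sqrt_eq_real_sqrt _ hXX.nonneg, cfcₙ_eq_cfc,
    hXX.1.cfc_eq, Matrix.IsHermitian.cfc, Unitary.conjStarAlgAut_apply]
  rfl

theorem re_qInner {n : ℕ} (X Y : Mq n) :
    (qInner X Y).re = ((2 : ℝ) ^ n)⁻¹ * (Xᴴ * Y).trace.re := by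
  rw [qInner, qTau, show ((2 : ℂ) ^ n)⁻¹ = (((2 : ℝ) ^ n)⁻¹ : ℝ) by push_cast; rfl,
    Complex.re_ofReal_mul]

theorem psi_inner_abs_general (n : ℕ) (t : ℝ) (ht : 0 ≤ t) (C : Mq n) :
    (qInner C (psiDep t C)).re + (qInner Cᴴ (psiDep t Cᴴ)).re ≤
      (qInner (mAbs C) (psiDep t (mAbs C))).re +
        (qInner (mAbs Cᴴ) (psiDep t (mAbs Cᴴ))).re := by
  have habs : ∀ X : Mq n, (CFC.abs X)ᴴ = CFC.abs X := fun X =>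
    (Matrix.nonneg_iff_posSemidef.mp (CFC.abs_nonneg X)).isHermitian
  simp only [re_qInner, mAbs_eq_abs, habs, Matrix.conjTranspose_conjTranspose, ← mul_add]
  exact mul_le_mul_of_nonneg_left ((isKrausMap_psiDep ht).re_trace_add_le_abs C) (by positivity)

/-- For the depolarizing semigroup:
`⟨|C|, Ψ_t^{⊗n}(|C|)⟩ + ⟨|C†|, Ψ_t^{⊗n}(|C†|)⟩ ≥ Re⟨C, Ψ_t^{⊗n}(C)⟩ + Re⟨C†, Ψ_t^{⊗n}(C†)⟩`. -/
theorem psi_inner_abs (n : ℕ) (hn : 1 ≤ n) (t : ℝ) (ht : 0 ≤ t) (C : Mq n) :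
    (qInner C (psiDep t C)).re + (qInner Cᴴ (psiDep t Cᴴ)).re ≤
      (qInner (mAbs C) (psiDep t (mAbs C))).re +
        (qInner (mAbs Cᴴ) (psiDep t (mAbs Cᴴ))).re :=
  psi_inner_abs_general n t ht C

end
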